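/- arXiv:1605.05300 — 2 statements merged into one kernel-verified Lean document; each statement's English description precedes it below -/
import Mathlib

section
/- The set {s^{j-1} t^m ds (mod dA), s^j t⁻¹ dt (mod dA), s⁻¹ ds (mod dA) : j ∈ ℤ, m ∈ ℤ, m ≠ 0} is linearly independent over ℂ in Ω_A / dA, where A = ℂ[s, s⁻¹, t, t⁻¹]. -/
/-!
Contracting a 1-form `ω` with the Euler derivations `s ∂/∂s` and `t ∂/∂t` writes it as
`ω = f ds/s + g dt/t`. For an exact form `da` the coefficients of `s^j t^m` in `(f, g)` are
`(j a_{jm}, m a_{jm})`, so the functionals `ω ↦ f_{jm} - (j/m) g_{jm}` (`m ≠ 0`), `ω ↦ g_{j0}` and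
`ω ↦ f_{00}` vanish on exact forms. They descend to `Ω_A/dA`, where they are dual to the family
`s^{j-1} t^m ds`, `s^j t⁻¹ dt`, `s⁻¹ ds`.
-/

open LaurentPolynomial

noncomputable section

abbrev A2 : Type := LaurentPolynomial (LaurentPolynomial ℂ)

def ss (k : ℤ) : A2 := LaurentPolynomial.T k
def tt (m : ℤ) : A2 := LaurentPolynomial.C (LaurentPolynomial.T m)

abbrev Ω2 := KaehlerDifferential ℂ A2

def dA : Submodule ℂ Ω2 := Submodule.span ℂ (Set.range (KaehlerDifferential.D ℂ A2))

abbrev Kq := Ω2 ⧸ dA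

def mkK : Ω2 →ₗ[ℂ] Kq := dA.mkQ

/-- The candidate basis of `𝒦' = Ω_A/dA`: elements `s^{j-1} t^m ds` (with `m ≠ 0`),
`s^j t⁻¹ dt`, and `s⁻¹ ds`. -/
def basisFamily : (ℤ × {m : ℤ // m ≠ 0}) ⊕ ℤ ⊕ Unit → Kq
  | Sum.inl (j, m) => mkK ((ss (j - 1) * tt m.val) • KaehlerDifferential.D ℂ A2 (ss 1))
  | Sum.inr (Sum.inl j) => mkK ((ss j * tt (-1)) • KaehlerDifferential.D ℂ A2 (tt 1))
  | Sum.inr (Sum.inr _) => mkK (ss (-1) • KaehlerDifferential.D ℂ A2 (ss 1))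

namespace AddMonoidAlgebra

variable {k R G : Type*} [CommSemiring k] [CommSemiring R] [Algebra k R] [AddCommMonoid G]

def extendDerivationₗ (d : R →ₗ[k] R) (φ : G →+ k) : R[G] →ₗ[k] R[G] :=
  Finsupp.lsum k (fun g ↦ lsingle g ∘ₗ (d + φ g • LinearMap.id)) ∘ₗ
    (coeffLinearEquiv k).toLinearMap

theorem extendDerivationₗ_single (d : R →ₗ[k] R) (φ : G →+ k) (g : G) (r : R) :
    extendDerivationₗ d φ (single g r) = single g (d r + φ g • r) :=
  Finsupp.lsum_single k _ _ _

def extendDerivation (d : Derivation k R R) (φ : G →+ k) : Derivation k R[G] R[G] where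
  toLinearMap := extendDerivationₗ d φ
  map_one_eq_zero' := by simp [one_def, extendDerivationₗ_single]
  leibniz' a b := by
    simp only [smul_eq_mul]
    induction a using induction_linear with
    | zero => simp
    | add f g hf hg => simp only [add_mul, map_add, hf, hg]; ring
    | single g r =>
      induction b using induction_linear with
      | zero => simp
      | add f g hf hg => simp only [mul_add, map_add, hf, hg]; ring
      | single h s =>
        simp only [single_mul_single, extendDerivationₗ_single, Derivation.coeFn_coe,
          Derivation.leibniz, smul_eq_mul, map_add, Algebra.smul_def]
        rw [add_comm h g, ← single_add]
        congr 1
        ring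

@[simp]
theorem extendDerivation_single (d : Derivation k R R) (φ : G →+ k) (g : G) (r : R) :
    extendDerivation d φ (single g r) = single g (d r + φ g • r) :=
  extendDerivationₗ_single _ _ _ _

@[simp]
theorem coeff_extendDerivation (d : Derivation k R R) (φ : G →+ k) (x : R[G]) (g : G) :
    (extendDerivation d φ x).coeff g = d (x.coeff g) + φ g • x.coeff g := by
  induction x using induction_linear with
  | zero => simp
  | add x y hx hy => simp only [map_add, coeff_add, Finsupp.add_apply, hx, hy, smul_add]; abel
  | single h r =>
    classical
    simp only [extendDerivation_single, coeff_single, Finsupp.single_apply]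
    split_ifs with hhg <;> simp [hhg]

end AddMonoidAlgebra

open AddMonoidAlgebra KaehlerDifferential

-- `s ∂/∂s` and `t ∂/∂t`; in `A2 = ℂ[t, t⁻¹][s, s⁻¹]` the variable `s` is the outer one.
def eulerS : Derivation ℂ A2 A2 := extendDerivation 0 (Int.castAddHom ℂ)

def eulerT : Derivation ℂ A2 A2 := extendDerivation (extendDerivation 0 (Int.castAddHom ℂ)) 0

theorem ss_eq_single (a : ℤ) : ss a = single a 1 := rfl

theorem tt_eq_single (b : ℤ) : tt b = single 0 (single b 1) := rfl

theorem eulerS_ss (k : ℤ) : eulerS (ss k) = (k : ℂ) • ss k := by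
  rw [eulerS, ss_eq_single, extendDerivation_single, smul_single]
  simp

theorem eulerS_tt (m : ℤ) : eulerS (tt m) = 0 := by
  rw [eulerS, tt_eq_single, extendDerivation_single]
  simp

theorem eulerT_ss (k : ℤ) : eulerT (ss k) = 0 := by
  rw [eulerT, ss_eq_single, extendDerivation_single]
  simp

theorem eulerT_tt (m : ℤ) : eulerT (tt m) = (m : ℂ) • tt m := by
  rw [eulerT, tt_eq_single, extendDerivation_single, extendDerivation_single]
  simp only [Derivation.zero_apply, AddMonoidHom.zero_apply, Int.coe_castAddHom, zero_add,
    zero_smul, add_zero, smul_single]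

theorem ss_add (a b : ℤ) : ss (a + b) = ss a * ss b := T_add a b

theorem tt_add (a b : ℤ) : tt (a + b) = tt a * tt b := by
  simp only [tt, T_add, map_mul]

theorem ss_mul_tt_mul_ss (a b c : ℤ) : ss a * tt b * ss c = ss (a + c) * tt b := by
  rw [ss_add]; ring

theorem ss_mul_tt_mul_tt (a b c : ℤ) : ss a * tt b * tt c = ss a * tt (b + c) := by
  rw [tt_add]; ring

theorem tt_zero : tt 0 = 1 := by
  rw [tt, T_zero, map_one]

def coeffST (a b : ℤ) : A2 →ₗ[ℂ] ℂ :=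
  Finsupp.lapply b ∘ₗ (coeffLinearEquiv ℂ).toLinearMap ∘ₗ Finsupp.lapply a ∘ₗ
    (coeffLinearEquiv ℂ).toLinearMap

theorem coeffST_apply (a b : ℤ) (x : A2) : coeffST a b x = (x.coeff a).coeff b := rfl

theorem coeffST_eulerS (a b : ℤ) (x : A2) : coeffST a b (eulerS x) = a * coeffST a b x := by
  simp [coeffST_apply, eulerS]

theorem coeffST_eulerT (a b : ℤ) (x : A2) : coeffST a b (eulerT x) = b * coeffST a b x := by
  simp [coeffST_apply, eulerT]

theorem coeffST_ss_mul_tt (a b a' b' : ℤ) :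
    coeffST a b (ss a' * tt b') = if a = a' ∧ b = b' then 1 else 0 := by
  rw [coeffST_apply, ss_eq_single, tt_eq_single, single_mul_single, add_zero, one_mul]
  simp only [coeff_single, Finsupp.single_apply]
  by_cases ha : a = a' <;> by_cases hb : b = b' <;>
    simp [ha, hb, eq_comm (a := a'), eq_comm (a := b')]

theorem coeffST_ss (a b a' : ℤ) : coeffST a b (ss a') = if a = a' ∧ b = 0 then 1 else 0 := by
  simpa [tt_zero] using coeffST_ss_mul_tt a b a' 0

abbrev BasisIndex : Type := (ℤ × {m : ℤ // m ≠ 0}) ⊕ ℤ ⊕ Unit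

def dualFunctional : BasisIndex → Module.Dual ℂ Ω2
  | .inl (j, m) => coeffST j m ∘ₗ eulerS.liftKaehlerDifferential.restrictScalars ℂ -
      ((j : ℂ) / m) • coeffST j m ∘ₗ eulerT.liftKaehlerDifferential.restrictScalars ℂ
  | .inr (.inl j) => coeffST j 0 ∘ₗ eulerT.liftKaehlerDifferential.restrictScalars ℂ
  | .inr (.inr _) => coeffST 0 0 ∘ₗ eulerS.liftKaehlerDifferential.restrictScalars ℂ

theorem dualFunctional_D (i : BasisIndex) (a : A2) : dualFunctional i (D ℂ A2 a) = 0 := by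
  rcases i with ⟨j, m, hm⟩ | j | _ <;> simp [dualFunctional, coeffST_eulerS, coeffST_eulerT]
  field_simp
  ring

theorem dA_le_ker_dualFunctional (i : BasisIndex) : dA ≤ LinearMap.ker (dualFunctional i) :=
  Submodule.span_le.mpr <| Set.range_subset_iff.mpr (dualFunctional_D i)

def dualFunctionalK (i : BasisIndex) : Module.Dual ℂ Kq :=
  dA.liftQ (dualFunctional i) (dA_le_ker_dualFunctional i)

theorem dualFunctionalK_basisFamily (i k : BasisIndex) :
    dualFunctionalK i (basisFamily k) = if i = k then 1 else 0 := by
  rcases i with ⟨j, m, hm⟩ | j | _ <;> rcases k with ⟨j', m', hm'⟩ | j' | _ <;>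
    simp [dualFunctionalK, mkK, basisFamily, dualFunctional, eulerS_ss, eulerS_tt, eulerT_ss,
      eulerT_tt, ss_mul_tt_mul_ss, ss_mul_tt_mul_tt, ← ss_add, coeffST_ss_mul_tt, coeffST_ss,
      eq_comm (a := (0 : ℤ)), *]

theorem stmt2 : LinearIndependent ℂ basisFamily :=
  .of_pairwise_dual_eq_zero_one _ dualFunctionalK
    (fun i k hik ↦ by simp [dualFunctionalK_basisFamily, hik])
    (fun i ↦ by simp [dualFunctionalK_basisFamily])

end
end

section
/- Let g be a finite dimensional Lie algebra over ℂ with a symmetric invariant bilinear form (·|·), let A = ℂ[s, s⁻¹, t, t⁻¹], and let 𝒦' = Ω_A/dA. Then the bracket [x⊗a, y⊗b] = [x,y]⊗ab + (x|y)·overline{b da}, with 𝒦' central, defines a Lie algebra structure on (g ⊗ A) ⊕ 𝒦'; i.e., the map (a,b) ↦ overline{b da} composed with the form (·|·) is a 2-cocycle on the loop algebra g ⊗ A. -/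
/-!
Write `τ(a ⊗ x, b ⊗ y) = (x|y) • φ(a, b)` with `φ(a, b) = overline{b da}`. Both identities
are multi-additive, so it suffices to check them on pure tensors, where they reduce to identities
for `φ` modulo exact forms. The Leibniz rule `d(ab) = a db + b da` makes `φ` skew (hence `τ`
alternating, as `2` is invertible), and `c d(ab) + a d(bc) + b d(ca) = 2 d(abc)` makes the cyclic
sum `φ(ab, c) + φ(bc, a) + φ(ca, b)` vanish. Symmetry and invariance make `([x, y]|z)` invariant
under cyclic permutations of `x, y, z`, so the cocycle sum on pure tensors is `([x, y]|z)` times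
that cyclic sum.
-/

open LaurentPolynomial TensorProduct

noncomputable section

namespace Derivation

variable {R S M N F : Type*} [CommSemiring R] [CommRing S] [Algebra R S]
  [AddCommGroup M] [Module R M] [Module S M] [AddCommGroup N]

/-- `D.smulPairing a b = b • D a`. -/
def smulPairing [IsScalarTower R S M] (D : Derivation R S M) : S →ₗ[R] S →ₗ[R] M :=
  ((Algebra.lsmul R R M).toLinearMap.compl₂ D.toLinearMap).flip

variable {D : Derivation R S M} [FunLike F M N] [AddMonoidHomClass F M N] {f : F}

lemma map_smul_add_map_smul_eq_zero (hf : ∀ p, f (D p) = 0) (a b : S) :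
    f (b • D a) + f (a • D b) = 0 := by
  rw [← map_add, add_comm, ← D.leibniz, hf]

lemma map_smul_cyclic_sum_eq_zero (hf : ∀ p, f (D p) = 0) (a b c : S) :
    f (c • D (a * b)) + f (a • D (b * c)) + f (b • D (c * a)) = 0 := by
  have hsum :
      c • D (a * b) + a • D (b * c) + b • D (c * a) = D (a * b * c) + D (a * b * c) := by
    simp only [D.leibniz, smul_add, smul_smul]
    module
  rw [← map_add, ← map_add, hsum, map_add, hf, add_zero]

end Derivation

section CurrentPairing

variable {R A L N : Type*} [CommRing R] [CommRing A] [Algebra R A] [LieRing L] [LieAlgebra R L]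
  [AddCommGroup N] [Module R N] (φ : A →ₗ[R] A →ₗ[R] N) (B : L →ₗ[R] L →ₗ[R] R)

def currentPairing : (A ⊗[R] L) →ₗ[R] (A ⊗[R] L) →ₗ[R] N :=
  (LinearMap.BilinMap.tmul φ B).compr₂ (TensorProduct.rid R N)

@[simp]
lemma currentPairing_tmul (a b : A) (x y : L) :
    currentPairing φ B (a ⊗ₜ x) (b ⊗ₜ y) = B x y • φ a b := by
  simp [currentPairing]

variable {φ B}

lemma currentPairing_add_swap (hφ : ∀ a b, φ a b + φ b a = 0) (hB : ∀ x y, B x y = B y x)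
    (u v : A ⊗[R] L) : currentPairing φ B u v + currentPairing φ B v u = 0 := by
  have h : currentPairing φ B + (currentPairing φ B).flip = 0 :=
    TensorProduct.ext' fun a x => TensorProduct.ext' fun b y => by
      simp [hB y x, ← smul_add, hφ]
  exact LinearMap.congr_fun₂ h u v

lemma currentPairing_self [Invertible (2 : R)] (hφ : ∀ a b, φ a b + φ b a = 0)
    (hB : ∀ x y, B x y = B y x) (u : A ⊗[R] L) : currentPairing φ B u u = 0 := by
  have h2 : (2 : R) • currentPairing φ B u u = 0 := by
    rw [two_smul, currentPairing_add_swap hφ hB]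
  simpa using congrArg (⅟(2 : R) • ·) h2

lemma currentPairing_cyclic_tmul
    (hφ : ∀ a b c, φ (a * b) c + φ (b * c) a + φ (c * a) b = 0) (hB : ∀ x y, B x y = B y x)
    (hBinv : ∀ x y z, B ⁅x, y⁆ z = B x ⁅y, z⁆) (a b c : A) (x y z : L) :
    currentPairing φ B ⁅a ⊗ₜ[R] x, b ⊗ₜ y⁆ (c ⊗ₜ z)
      + currentPairing φ B ⁅b ⊗ₜ[R] y, c ⊗ₜ z⁆ (a ⊗ₜ x)
      + currentPairing φ B ⁅c ⊗ₜ[R] z, a ⊗ₜ x⁆ (b ⊗ₜ y) = 0 := by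
  have hyz : B ⁅y, z⁆ x = B ⁅x, y⁆ z := by rw [hB, ← hBinv]
  have hzx : B ⁅z, x⁆ y = B ⁅x, y⁆ z := by rw [hBinv, hB]
  simp only [LieAlgebra.ExtendScalars.bracket_tmul, currentPairing_tmul, hyz, hzx, ← smul_add,
    hφ, smul_zero]

lemma currentPairing_cyclic
    (hφ : ∀ a b c, φ (a * b) c + φ (b * c) a + φ (c * a) b = 0) (hB : ∀ x y, B x y = B y x)
    (hBinv : ∀ x y z, B ⁅x, y⁆ z = B x ⁅y, z⁆) (u v w : A ⊗[R] L) :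
    currentPairing φ B ⁅u, v⁆ w + currentPairing φ B ⁅v, w⁆ u
      + currentPairing φ B ⁅w, u⁆ v = 0 := by
  induction u using TensorProduct.induction_on with
  | zero => simp
  | add u₁ u₂ h₁ h₂ =>
    simp only [add_lie, lie_add, map_add, LinearMap.add_apply]
    linear_combination (norm := module) h₁ + h₂
  | tmul a x =>
    induction v using TensorProduct.induction_on with
    | zero => simp
    | add v₁ v₂ h₁ h₂ =>
      simp only [add_lie, lie_add, map_add, LinearMap.add_apply]
      linear_combination (norm := module) h₁ + h₂
    | tmul b y =>
      induction w using TensorProduct.induction_on with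
      | zero => simp
      | add w₁ w₂ h₁ h₂ =>
        simp only [add_lie, lie_add, map_add, LinearMap.add_apply]
        linear_combination (norm := module) h₁ + h₂
      | tmul c z => exact currentPairing_cyclic_tmul hφ hB hBinv a b c x y z

end CurrentPairing

theorem stmt4_general (g : Type) [LieRing g] [LieAlgebra ℂ g]
    (B : g →ₗ[ℂ] g →ₗ[ℂ] ℂ)
    (hsymm : ∀ x y : g, B x y = B y x)
    (hinv : ∀ x y z : g, B ⁅x, y⁆ z = B x ⁅y, z⁆) :
    ∃ τ : (A2 ⊗[ℂ] g) →ₗ[ℂ] (A2 ⊗[ℂ] g) →ₗ[ℂ] Kq,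
      (∀ (a b : A2) (x y : g),
        τ (a ⊗ₜ x) (b ⊗ₜ y) = B x y • mkK (b • KaehlerDifferential.D ℂ A2 a)) ∧
      (∀ u : A2 ⊗[ℂ] g, τ u u = 0) ∧
      (∀ u v w : A2 ⊗[ℂ] g, τ ⁅u, v⁆ w + τ ⁅v, w⁆ u + τ ⁅w, u⁆ v = 0) := by
  let φ := (KaehlerDifferential.D ℂ A2).smulPairing.compr₂ mkK
  have hexact (p : A2) : mkK (KaehlerDifferential.D ℂ A2 p) = 0 :=
    (Submodule.Quotient.mk_eq_zero dA).mpr (Submodule.subset_span ⟨p, rfl⟩)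
  refine ⟨currentPairing φ B, fun a b x y => currentPairing_tmul φ B a b x y,
    currentPairing_self ?_ hsymm, currentPairing_cyclic ?_ hsymm hinv⟩
  · exact Derivation.map_smul_add_map_smul_eq_zero hexact
  · exact Derivation.map_smul_cyclic_sum_eq_zero hexact

/-- The pairing `(x⊗a, y⊗b) ↦ (x|y)·overline{b da}` is a well-defined alternating
2-cocycle on the loop algebra `g ⊗ A`, so the corresponding central extension
`(g ⊗ A) ⊕ 𝒦'` is a Lie algebra. -/
theorem stmt4 (g : Type) [LieRing g] [LieAlgebra ℂ g] [FiniteDimensional ℂ g]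
    (B : g →ₗ[ℂ] g →ₗ[ℂ] ℂ)
    (hsymm : ∀ x y : g, B x y = B y x)
    (hinv : ∀ x y z : g, B ⁅x, y⁆ z = B x ⁅y, z⁆) :
    ∃ τ : (A2 ⊗[ℂ] g) →ₗ[ℂ] (A2 ⊗[ℂ] g) →ₗ[ℂ] Kq,
      (∀ (a b : A2) (x y : g),
        τ (a ⊗ₜ x) (b ⊗ₜ y) = B x y • mkK (b • KaehlerDifferential.D ℂ A2 a)) ∧
      (∀ u : A2 ⊗[ℂ] g, τ u u = 0) ∧
      (∀ u v w : A2 ⊗[ℂ] g, τ ⁅u, v⁆ w + τ ⁅v, w⁆ u + τ ⁅w, u⁆ v = 0) :=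
  stmt4_general g B hsymm hinv
end
end
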